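/- Let A ∈ ℝ^{N×N} be Hurwitz, B ∈ ℝ^{N×M} and C ∈ ℝ^{M×N}. Then the trace of the cross Gramian satisfies tr(W_X) = ∫₀^∞ tr(C · exp(2tA) · B) dt, where W_X = ∫₀^∞ exp(tA) B C exp(tA) dt. (This integral is the trace of the Hankel operator of the system, so tr(H) = tr(W_X).) -/

import Mathlib

open MeasureTheory Matrix NormedSpace

attribute [local instance] Matrix.normedAddCommGroup Matrix.normedSpace

/-- `A` is Hurwitz: every complex eigenvalue of `A` has strictly negative real part. -/
def IsHurwitz {N : ℕ} (A : Matrix (Fin N) (Fin N) ℝ) : Prop :=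
  ∀ μ ∈ spectrum ℂ (A.map Complex.ofReal), μ.re < 0

/-!
The trace is a continuous linear functional, so it commutes with the Bochner integral as soon as
the integrand `e^{tA} B C e^{tA}` is integrable, and pointwise
`tr (e^{tA} B C e^{tA}) = tr (C e^{2tA} B)` by cyclicity of the trace.

Integrability comes from the exponential decay of `e^{tA}` for Hurwitz `A`. If
`(A - μ)^K v = 0`, the exponential series truncates:
`e^{tA} v = e^{tμ} ∑_{k<K} t^k / k! (A - μ)^k v = O(e^{(Re μ + ε) t})`.
The generalized eigenspaces of the complexified `A` span `ℂ^N`, so `‖e^{tA}‖ = O(e^{-δ t})`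
for some `δ > 0`.
-/

open Filter Topology Asymptotics Set
open scoped Nat

theorem Matrix.norm_mul_le_card_mul_norm_mul_norm {m n o α : Type*} [Fintype m] [Fintype n]
    [Fintype o] [NonUnitalNormedRing α] (X : Matrix m n α) (Y : Matrix n o α) :
    ‖X * Y‖ ≤ Fintype.card n * ‖X‖ * ‖Y‖ := by
  refine (norm_le_iff (by positivity)).mpr fun i j => ?_
  calc ‖(X * Y) i j‖ ≤ ∑ k, ‖X i k‖ * ‖Y k j‖ :=
        (norm_sum_le _ _).trans (Finset.sum_le_sum fun k _ => norm_mul_le _ _)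
    _ ≤ ∑ _k : n, ‖X‖ * ‖Y‖ := Finset.sum_le_sum fun k _ =>
        mul_le_mul (norm_entry_le_entrywise_sup_norm X) (norm_entry_le_entrywise_sup_norm Y)
          (norm_nonneg _) (norm_nonneg _)
    _ = Fintype.card n * ‖X‖ * ‖Y‖ := by simp [mul_assoc]

theorem Asymptotics.IsBigO.matrix_mul {ι m n o α : Type*} [Fintype m] [Fintype n] [Fintype o]
    [NonUnitalNormedRing α] {l : Filter ι} {f : ι → Matrix m n α} {g : ι → Matrix n o α}
    {u v : ι → ℝ} (hf : f =O[l] u) (hg : g =O[l] v) :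
    (fun x => f x * g x) =O[l] fun x => u x * v x := by
  refine (IsBigO.of_bound (Fintype.card n) (Eventually.of_forall fun x => ?_)).trans
    (hf.norm_left.mul hg.norm_left)
  rw [Real.norm_of_nonneg (by positivity), ← mul_assoc]
  exact Matrix.norm_mul_le_card_mul_norm_mul_norm _ _

namespace Matrix

variable {n : Type*} [Fintype n] [DecidableEq n]

theorem continuous_exp_smul {𝕜 : Type*} [RCLike 𝕜] (A : Matrix n n 𝕜) :
    Continuous fun t : ℝ => exp (t • A) :=
  open scoped Norms.Operator in
  (exp_continuous (𝔸 := Matrix n n 𝕜)).comp (continuous_id.smul continuous_const)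

theorem exp_map_ofReal (X : Matrix n n ℝ) :
    (exp X).map Complex.ofReal = exp (X.map Complex.ofReal) :=
  open scoped Norms.Operator in
  map_exp (Complex.ofRealHom.mapMatrix : Matrix n n ℝ →+* Matrix n n ℂ)
    (continuous_id.matrix_map Complex.continuous_ofReal) X

theorem exp_smul_one_add (c : ℂ) (X : Matrix n n ℂ) :
    exp (c • (1 : Matrix n n ℂ) + X) = Complex.exp c • exp X := by
  rw [exp_add_of_commute _ _ ((Commute.one_left X).smul_left c), ← Algebra.algebraMap_eq_smul_one,
    Complex.exp_eq_exp_ℂ, Algebra.smul_def]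
  congr 1
  open scoped Norms.Operator in exact (algebraMap_exp_comm c).symm

theorem exp_mulVec_eq_sum_of_pow_mulVec_eq_zero {𝕜 : Type*} [RCLike 𝕜] (X : Matrix n n 𝕜)
    {v : n → 𝕜} {K : ℕ} (hv : X ^ K *ᵥ v = 0) :
    exp X *ᵥ v = ∑ k ∈ Finset.range K, (k !⁻¹ : 𝕜) • (X ^ k *ᵥ v) := by
  have hsum : Summable fun k : ℕ => (k !⁻¹ : 𝕜) • X ^ k :=
    open scoped Norms.Operator in expSeries_summable' X
  rw [exp_eq_tsum 𝕜]
  change mulVec.addMonoidHomLeft v (∑' k : ℕ, (k !⁻¹ : 𝕜) • X ^ k) = _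
  rw [hsum.map_tsum _ (continuous_id.matrix_mulVec continuous_const),
    tsum_eq_sum (s := Finset.range K)]
  · exact Finset.sum_congr rfl fun k _ => smul_mulVec _ _ _
  intro k hk
  obtain ⟨j, rfl⟩ := Nat.exists_eq_add_of_le' (not_lt.mp (Finset.mem_range.not.mp hk))
  change (((j + K)! ⁻¹ : 𝕜) • X ^ (j + K)) *ᵥ v = 0
  rw [smul_mulVec, pow_add, ← mulVec_mulVec, hv, mulVec_zero, smul_zero]

theorem isBigO_exp_smul_mulVec_of_pow_sub_mulVec_eq_zero (A : Matrix n n ℂ) {μ : ℂ}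
    {v : n → ℂ} {K : ℕ} (hv : (A - μ • 1) ^ K *ᵥ v = 0) {ε : ℝ} (hε : 0 < ε) :
    (fun t : ℝ => exp ((t : ℂ) • A) *ᵥ v) =O[atTop] fun t => Real.exp ((μ.re + ε) * t) := by
  set X := A - μ • 1
  have hexpand (t : ℝ) : exp ((t : ℂ) • A) *ᵥ v =
      Complex.exp (t * μ) • ∑ k ∈ Finset.range K, (t : ℂ) ^ k • ((k !⁻¹ : ℂ) • (X ^ k *ᵥ v)) := by
    have hA : (t : ℂ) • A = ((t : ℂ) * μ) • 1 + (t : ℂ) • X := by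
      rw [mul_smul, ← smul_add, add_sub_cancel]
    have htX : ((t : ℂ) • X) ^ K *ᵥ v = 0 := by rw [smul_pow, smul_mulVec, hv, smul_zero]
    rw [hA, exp_smul_one_add, smul_mulVec, exp_mulVec_eq_sum_of_pow_mulVec_eq_zero _ htX]
    simp only [smul_pow, smul_mulVec, smul_comm ((_ : ℕ) ! ⁻¹ : ℂ)]
  have hexp : (fun t : ℝ => Complex.exp (t * μ)) =O[atTop] fun t => Real.exp (μ.re * t) :=
    isBigO_of_le _ fun t => by simp [Complex.norm_exp, mul_comm]
  have hpoly : (fun t : ℝ => ∑ k ∈ Finset.range K, (t : ℂ) ^ k • ((k !⁻¹ : ℂ) • (X ^ k *ᵥ v)))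
      =O[atTop] fun t => Real.exp (ε * t) := by
    refine IsBigO.fun_sum fun k _ => ?_
    refine IsBigO.trans ?_ (isLittleO_pow_exp_pos_mul_atTop k hε).isBigO
    exact IsBigO.of_bound ‖(k !⁻¹ : ℂ) • (X ^ k *ᵥ v)‖ (Eventually.of_forall fun t => by
      simp [norm_smul, mul_comm])
  simpa only [hexpand, smul_eq_mul, ← Real.exp_add, ← add_mul] using hexp.smul hpoly

def growthSubmodule (A : Matrix n n ℂ) (r : ℝ) : Submodule ℂ (n → ℂ) where
  carrier := {v | (fun t : ℝ => exp ((t : ℂ) • A) *ᵥ v) =O[atTop] fun t => Real.exp (r * t)}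
  add_mem' hv hw := by simpa only [Set.mem_ofPred_eq, mulVec_add] using hv.add hw
  zero_mem' := by simpa only [Set.mem_ofPred_eq, mulVec_zero] using isBigO_zero _ _
  smul_mem' c v hv :=
    (hv.const_smul_left c).congr_left fun t => (mulVec_smul _ c v).symm

@[simp]
theorem mem_growthSubmodule {A : Matrix n n ℂ} {r : ℝ} {v : n → ℂ} :
    v ∈ growthSubmodule A r ↔
      (fun t : ℝ => exp ((t : ℂ) • A) *ᵥ v) =O[atTop] fun t => Real.exp (r * t) :=
  Iff.rfl

theorem maxGenEigenspace_le_growthSubmodule (A : Matrix n n ℂ) {μ : ℂ} {r : ℝ}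
    (hμ : μ.re < r) : Module.End.maxGenEigenspace (toLin' A) μ ≤ growthSubmodule A r := by
  intro v hv
  obtain ⟨K, hK⟩ := (Module.End.mem_maxGenEigenspace _ _ _).mp hv
  have hK' : (A - μ • 1) ^ K *ᵥ v = 0 := by
    change toLinAlgEquiv' ((A - μ • 1) ^ K) v = 0
    rwa [map_pow, map_sub, map_smul, map_one]
  simpa only [mem_growthSubmodule, add_sub_cancel] using
    isBigO_exp_smul_mulVec_of_pow_sub_mulVec_eq_zero A hK' (sub_pos.mpr hμ)

theorem growthSubmodule_eq_top {A : Matrix n n ℂ} {r : ℝ} (h : ∀ μ ∈ spectrum ℂ A, μ.re < r) :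
    growthSubmodule A r = ⊤ := by
  refine eq_top_iff.mpr <| (Module.End.iSup_maxGenEigenspace_eq_top (toLin' A)).ge.trans <|
    iSup_le fun μ => ?_
  by_cases hμ : μ ∈ spectrum ℂ A
  · exact maxGenEigenspace_le_growthSubmodule A (h μ hμ)
  · have hbot : Module.End.maxGenEigenspace (toLin' A) μ = ⊥ := by
      by_contra hne
      rw [← spectrum_toLin'] at hμ
      exact hμ (Module.End.HasUnifEigenvalue.lt (k := ⊤) zero_lt_one hne).mem_spectrum
    exact hbot.le.trans bot_le

theorem isBigO_exp_ofReal_smul_of_forall_re_lt {A : Matrix n n ℂ} {r : ℝ}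
    (h : ∀ μ ∈ spectrum ℂ A, μ.re < r) :
    (fun t : ℝ => exp ((t : ℂ) • A)) =O[atTop] fun t => Real.exp (r * t) := by
  refine IsBigO.of_norm_left <| ((isBigO_pi.mpr fun j => ?_).norm_left).congr_left
    fun t => norm_transpose _
  have hj : Pi.single j 1 ∈ growthSubmodule A r := growthSubmodule_eq_top h ▸ Submodule.mem_top
  simp only [mem_growthSubmodule, mulVec_single_one] at hj
  exact hj

theorem isBigO_exp_smul_of_forall_re_lt {A : Matrix n n ℝ} {r : ℝ}
    (h : ∀ μ ∈ spectrum ℂ (A.map Complex.ofReal), μ.re < r) :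
    (fun t : ℝ => exp (t • A)) =O[atTop] fun t => Real.exp (r * t) := by
  refine IsBigO.of_norm_left <|
    (isBigO_exp_ofReal_smul_of_forall_re_lt h).norm_left.congr_left fun t => ?_
  have hmap : (t • A).map Complex.ofReal = (t : ℂ) • A.map Complex.ofReal := by
    ext; simp
  rw [← hmap, ← exp_map_ofReal, norm_map_eq _ _ Complex.norm_real]

theorem trace_exp_smul_mul_mul_exp_smul {m : Type*} [Fintype m] (A : Matrix n n ℝ)
    (B : Matrix n m ℝ) (C : Matrix m n ℝ) (t : ℝ) :
    (exp (t • A) * B * C * exp (t • A)).trace = (C * exp ((2 * t) • A) * B).trace := by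
  rw [two_mul, add_smul, exp_add_of_commute _ _ (Commute.refl _)]
  calc (exp (t • A) * B * C * exp (t • A)).trace
      = (exp (t • A) * exp (t • A) * B * C).trace := by
        rw [trace_mul_comm, ← Matrix.mul_assoc, ← Matrix.mul_assoc]
    _ = (C * (exp (t • A) * exp (t • A)) * B).trace := by
        rw [trace_mul_comm, Matrix.mul_assoc C]

end Matrix

/-- `Integrable` asks for `ContinuousENorm` over `instTopologicalSpaceMatrix`, which the sup-norm
instance `Matrix.normedAddCommGroup` matches only after unfolding. -/
instance Matrix.instContinuousENorm {m n α : Type*} [Fintype m] [Fintype n]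
    [NormedAddCommGroup α] : ContinuousENorm (Matrix m n α) :=
  SeminormedAddGroup.toContinuousENorm

theorem Matrix.trace_integral {X 𝕜 n : Type*} [MeasurableSpace X] {μ : Measure X} [RCLike 𝕜]
    [Fintype n] {f : X → Matrix n n 𝕜} (hf : Integrable f μ) :
    (∫ x, f x ∂μ).trace = ∫ x, (f x).trace ∂μ :=
  ((traceLinearMap n ℝ 𝕜).toContinuousLinearMap.integral_comp_comm hf).symm

theorem integrableOn_Ioi_of_isBigO_exp_neg {E : Type*} [NormedAddCommGroup E] {f : ℝ → E}
    {a b : ℝ} (hb : 0 < b) (hf : ContinuousOn f (Ici a))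
    (ho : f =O[atTop] fun x => Real.exp (-b * x)) : IntegrableOn f (Ioi a) :=
  integrableOn_Ici_iff_integrableOn_Ioi (by finiteness) |>.mp <|
    (hf.locallyIntegrableOn measurableSet_Ici).integrableOn_of_isBigO_atTop
    ho ⟨Ioi b, Ioi_mem_atTop b, exp_neg_integrableOn_Ioi b hb⟩

namespace IsHurwitz

variable {N : ℕ} {A : Matrix (Fin N) (Fin N) ℝ}

theorem exists_isBigO_exp_smul (hA : IsHurwitz A) :
    ∃ δ > 0, (fun t : ℝ => exp (t • A)) =O[atTop] fun t => Real.exp (-δ * t) := by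
  have hgap : ∀ᶠ r in 𝓝[<] (0 : ℝ), ∀ μ ∈ spectrum ℂ (A.map Complex.ofReal), μ.re < r :=
    (eventually_all_finite (Matrix.finite_spectrum _)).mpr fun μ hμ =>
      nhdsWithin_le_nhds (lt_mem_nhds (hA μ hμ))
  obtain ⟨r, hr, hr0⟩ := (hgap.and self_mem_nhdsWithin).exists
  exact ⟨-r, neg_pos.mpr hr0, by simpa using Matrix.isBigO_exp_smul_of_forall_re_lt hr⟩

theorem integrableOn_exp_smul_mul_mul_exp_smul {M : ℕ} (hA : IsHurwitz A)
    (B : Matrix (Fin N) (Fin M) ℝ) (C : Matrix (Fin M) (Fin N) ℝ) :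
    IntegrableOn (fun t : ℝ => exp (t • A) * B * C * exp (t • A)) (Ioi 0) := by
  obtain ⟨δ, hδ, hdecay⟩ := hA.exists_isBigO_exp_smul
  have hcont := Matrix.continuous_exp_smul A
  refine integrableOn_Ioi_of_isBigO_exp_neg (mul_pos two_pos hδ)
    (((hcont.matrix_mul continuous_const).matrix_mul continuous_const).matrix_mul
      hcont).continuousOn ?_
  refine (((hdecay.matrix_mul (isBigO_const_const B one_ne_zero atTop)).matrix_mul
    (isBigO_const_const C one_ne_zero atTop)).matrix_mul hdecay).congr_right fun t => ?_
  rw [mul_one, mul_one, ← Real.exp_add]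
  ring_nf

end IsHurwitz

/-- The trace of the cross Gramian equals the trace of the Hankel operator:
`tr(W_X) = ∫₀^∞ tr(C exp(2tA) B) dt`. -/
theorem trace_crossGramian_eq_trace_hankel {N M : ℕ}
    (A : Matrix (Fin N) (Fin N) ℝ) (B : Matrix (Fin N) (Fin M) ℝ)
    (C : Matrix (Fin M) (Fin N) ℝ) (hA : IsHurwitz A) :
    (∫ t in Set.Ioi (0 : ℝ), NormedSpace.exp (t • A) * B * C * NormedSpace.exp (t • A)).trace =
      ∫ t in Set.Ioi (0 : ℝ), (C * NormedSpace.exp ((2 * t) • A) * B).trace := by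
  rw [Matrix.trace_integral (hA.integrableOn_exp_smul_mul_mul_exp_smul B C)]
  exact setIntegral_congr_fun measurableSet_Ioi fun t _ =>
    Matrix.trace_exp_smul_mul_mul_exp_smul A B C t
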